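/- arXiv:2203.01088 — 2 statements merged into one kernel-verified Lean document; each statement's English description precedes it below -/
import Mathlib

section
/- Let G be a connected graph that is not bipartite and satisfies Δ(G) ≤ 2χ(G) − 3. Then the corona H of G satisfies χ_pcf(H) = χ(G). -/
open SimpleGraph

/-- A proper conflict-free coloring: proper, and every non-isolated vertex has a color
appearing exactly once in its open neighborhood. -/
def IsPCFColoring {V : Type*} (G : SimpleGraph V) {n : ℕ} (c : V → Fin n) : Prop :=
  (∀ u v, G.Adj u v → c u ≠ c v) ∧
  ∀ v : V, (G.neighborSet v).Nonempty →
    ∃ k : Fin n, ∃! u, u ∈ G.neighborSet v ∧ c u = k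

/-- The PCF chromatic number. -/
noncomputable def pcfChromNum {V : Type*} (G : SimpleGraph V) : ℕ :=
  sInf {n | ∃ c : V → Fin n, IsPCFColoring G c}

/-- The chromatic number (as a natural number). -/
noncomputable def chromNum {V : Type*} (G : SimpleGraph V) : ℕ :=
  sInf {n | G.Colorable n}
/-- The corona of a graph: attach one pendant vertex to each vertex. -/
def corona {V : Type*} (G : SimpleGraph V) : SimpleGraph (V ⊕ V) :=
  SimpleGraph.fromRel (fun a b => match a, b with
    | Sum.inl u, Sum.inl v => G.Adj u v
    | Sum.inl u, Sum.inr v => u = v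
    | _, _ => False)

/-!
Take a proper coloring `c` of `G` with `χ = χ(G)` colors. Since `deg v ≤ 2χ - 3 < 2(χ - 1)`,
pigeonhole over the `χ - 1` colors other than `c v` yields a color `j ≠ c v` carried by at most
one neighbor of `v`. If no neighbor carries `j`, the pendant vertex of `v` gets `j`; if exactly one
does, the pendant gets a third color, which exists because `G` is not bipartite, so `χ ≥ 3`.
Either way `j` occurs exactly once around `v`, and a pendant vertex has a single neighbor.
Conversely, a PCF coloring of the corona restricts to a proper coloring of `G`.
-/

open Finset

section Corona

variable {V : Type*} (G : SimpleGraph V)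

@[simp]
lemma corona_adj_inl_inl (u v : V) : (corona G).Adj (.inl u) (.inl v) ↔ G.Adj u v := by
  simp only [corona, fromRel_adj, ne_eq, Sum.inl.injEq]
  exact ⟨fun ⟨_, h⟩ => h.elim id fun h => h.symm, fun h => ⟨h.ne, .inl h⟩⟩

@[simp]
lemma corona_adj_inl_inr (u v : V) : (corona G).Adj (.inl u) (.inr v) ↔ u = v := by
  simp [corona]

@[simp]
lemma corona_adj_inr_inl (u v : V) : (corona G).Adj (.inr u) (.inl v) ↔ u = v := by
  simp [corona, eq_comm]

@[simp]
lemma corona_adj_inr_inr (u v : V) : ¬ (corona G).Adj (.inr u) (.inr v) := by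
  simp [corona]

def coronaInlHom : G →g corona G := ⟨Sum.inl, (corona_adj_inl_inl G _ _).2⟩

end Corona

lemma IsPCFColoring.colorable {V : Type*} {G : SimpleGraph V} {n : ℕ} {c : V → Fin n}
    (hc : IsPCFColoring G c) : G.Colorable n :=
  ⟨Coloring.mk c fun h => hc.1 _ _ h⟩

lemma pcfChromNum_le {V : Type*} {G : SimpleGraph V} {n : ℕ} {c : V → Fin n}
    (hc : IsPCFColoring G c) : pcfChromNum G ≤ n :=
  Nat.sInf_le ⟨c, hc⟩

lemma chromNum_le {V : Type*} {G : SimpleGraph V} {n : ℕ} (h : G.Colorable n) :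
    chromNum G ≤ n :=
  Nat.sInf_le h

lemma colorable_chromNum {V : Type*} [Fintype V] (G : SimpleGraph V) :
    G.Colorable (chromNum G) :=
  Nat.sInf_mem (s := {n | G.Colorable n}) ⟨_, G.colorable_of_fintype⟩

lemma chromNum_le_pcfChromNum_corona {V : Type*} {G : SimpleGraph V} {n : ℕ}
    {c : V ⊕ V → Fin n} (hc : IsPCFColoring (corona G) c) :
    chromNum G ≤ pcfChromNum (corona G) :=
  le_csInf ⟨n, c, hc⟩ fun _ ⟨_, hc'⟩ => chromNum_le (hc'.colorable.of_hom (coronaInlHom G))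

section PendantColors

variable {V : Type*} {G : SimpleGraph V} {k : ℕ}

lemma isPCFColoring_corona_sumElim (c : G.Coloring (Fin k)) (p : V → Fin k)
    (hp : ∀ v, p v ≠ c v)
    (hwit : ∀ v, ∃ j, (p v = j ∧ ∀ u, G.Adj v u → c u ≠ j) ∨
      (p v ≠ j ∧ ∃! u, G.Adj v u ∧ c u = j)) :
    IsPCFColoring (corona G) (Sum.elim c p) := by
  refine ⟨?_, ?_⟩
  · rintro (u | u) (v | v) h <;> simp only [corona_adj_inl_inl, corona_adj_inl_inr,
      corona_adj_inr_inl, corona_adj_inr_inr] at h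
    · exact c.valid h
    · subst h; exact (hp u).symm
    · subst h; exact hp u
  rintro (v | v) -
  · obtain ⟨j, ⟨hpj, hN⟩ | ⟨hpj, u₀, ⟨hu₀, hcu₀⟩, huniq⟩⟩ := hwit v
    · refine ⟨j, .inr v, ⟨by simp, hpj⟩, ?_⟩
      rintro (u | u) ⟨hu, hcu⟩
      · exact absurd hcu (hN u ((corona_adj_inl_inl G v u).1 hu))
      · rw [(corona_adj_inl_inr G v u).1 hu]
    · refine ⟨j, .inl u₀, ⟨(corona_adj_inl_inl G v u₀).2 hu₀, hcu₀⟩, ?_⟩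
      rintro (u | u) ⟨hu, hcu⟩
      · rw [huniq u ⟨(corona_adj_inl_inl G v u).1 hu, hcu⟩]
      · rw [← (corona_adj_inl_inr G v u).1 hu] at hcu
        exact absurd hcu hpj
  · refine ⟨c v, .inl v, ⟨by simp, rfl⟩, ?_⟩
    rintro (u | u) ⟨hu, -⟩
    · rw [(corona_adj_inr_inl G v u).1 hu]
    · exact absurd hu (corona_adj_inr_inr G v u)

lemma exists_card_filter_neighborFinset_le_one (c : V → Fin k) (v : V)
    [Fintype (G.neighborSet v)] (hdeg : G.degree v < 2 * (k - 1)) :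
    ∃ j ≠ c v, #{u ∈ G.neighborFinset v | c u = j} ≤ 1 := by
  have hcard : #(G.neighborFinset v) < #(univ.erase (c v)) * 2 := by
    rw [card_neighborFinset_eq_degree, card_erase_of_mem (mem_univ _), card_univ,
      Fintype.card_fin]
    omega
  obtain ⟨j, hj, hfiber⟩ := exists_card_fiber_lt_of_card_lt_mul hcard
  exact ⟨j, ne_of_mem_erase hj, Nat.le_of_lt_succ hfiber⟩

lemma exists_pendant_color (c : V → Fin k) (hk : 3 ≤ k) (v : V) [Fintype (G.neighborSet v)]
    (hdeg : G.degree v < 2 * (k - 1)) :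
    ∃ p ≠ c v, ∃ j, (p = j ∧ ∀ u, G.Adj v u → c u ≠ j) ∨
      (p ≠ j ∧ ∃! u, G.Adj v u ∧ c u = j) := by
  obtain ⟨j, hjv, hj⟩ := exists_card_filter_neighborFinset_le_one c v hdeg
  rcases Nat.le_one_iff_eq_zero_or_eq_one.1 hj with h0 | h1
  · refine ⟨j, hjv, j, .inl ⟨rfl, fun u hu hcu => ?_⟩⟩
    exact (filter_eq_empty_iff.1 (card_eq_zero.1 h0)) ((mem_neighborFinset G v u).2 hu) hcu
  · obtain ⟨p, -, hp⟩ := exists_mem_notMem_of_card_lt_card (s := {c v, j}) (t := univ)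
      (by simpa using card_le_two.trans_lt hk)
    simp only [mem_insert, mem_singleton, not_or] at hp
    obtain ⟨u₀, hu₀⟩ := card_eq_one_iff_existsUnique.1 h1
    exact ⟨p, hp.1, j, .inr ⟨hp.2, u₀, by simpa using hu₀⟩⟩

end PendantColors

theorem pcf_corona_nonbipartite_general {V : Type*} [Fintype V] (G : SimpleGraph V)
    [DecidableRel G.Adj] (hbip : ¬ G.Colorable 2)
    (hdeg : G.maxDegree ≤ 2 * chromNum G - 3) :
    pcfChromNum (corona G) = chromNum G := by
  obtain ⟨c⟩ := colorable_chromNum G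
  have hk : 3 ≤ chromNum G := by
    by_contra! h
    exact hbip ((colorable_chromNum G).mono (by omega))
  choose p hpc hwit using fun v => exists_pendant_color (G := G) c hk v
    (by have := G.degree_le_maxDegree v; omega)
  have hpcf := isPCFColoring_corona_sumElim c p hpc hwit
  exact le_antisymm (pcfChromNum_le hpcf) (chromNum_le_pcfChromNum_corona hpcf)

theorem pcf_corona_nonbipartite {V : Type*} [Fintype V] (G : SimpleGraph V)
    [DecidableRel G.Adj] (hG : G.Connected) (hbip : ¬ G.Colorable 2)
    (hdeg : G.maxDegree ≤ 2 * chromNum G - 3) :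
    pcfChromNum (corona G) = chromNum G :=
  pcf_corona_nonbipartite_general G hbip hdeg
end

section
/- Every claw-free graph G in which every vertex has odd degree satisfies χ_pcf(G) = χ(G). -/
open SimpleGraph

/-- A graph is claw-free if it has no induced `K_{1,3}`. -/
def ClawFree {V : Type*} (G : SimpleGraph V) : Prop :=
  ∀ v a b c : V, a ≠ b → a ≠ c → b ≠ c →
    G.Adj v a → G.Adj v b → G.Adj v c → (G.Adj a b ∨ G.Adj a c ∨ G.Adj b c)

/-- In a claw-free graph with all degrees odd, every proper coloring is PCF. -/
lemma proper_is_pcf {V : Type*} [Fintype V] (G : SimpleGraph V) [DecidableRel G.Adj]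
    (hclaw : ClawFree G) (hodd : ∀ v : V, Odd (G.degree v)) {n : ℕ} (c : V → Fin n)
    (hc : ∀ u v, G.Adj u v → c u ≠ c v) : IsPCFColoring G c := by
  refine ⟨hc, fun v _ => ?_⟩
  classical
  -- fibers of c on the neighborhood
  have hsum : ∑ k : Fin n, ((G.neighborFinset v).filter (fun u => c u = k)).card
      = G.degree v := by
    rw [← G.card_neighborFinset_eq_degree]
    exact (Finset.card_eq_sum_card_fiberwise (fun u _ => Finset.mem_univ (c u))).symm
  -- some fiber has odd cardinality
  have hoddfib : ∃ k : Fin n, Odd ((G.neighborFinset v).filter (fun u => c u = k)).card := by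
    by_contra h
    push_neg at h
    simp only [Nat.not_odd_iff_even] at h
    have : Even (G.degree v) := by
      rw [← hsum]
      exact Finset.sum_induction _ Even (fun a b ha hb => ha.add hb) Even.zero (fun k _ => h k)
    exact (Nat.not_even_iff_odd.mpr (hodd v)) this
  obtain ⟨k, hk⟩ := hoddfib
  set s := (G.neighborFinset v).filter (fun u => c u = k) with hs
  -- fibers have cardinality ≤ 2 by claw-freeness
  have hle : s.card ≤ 2 := by
    by_contra h
    push_neg at h
    obtain ⟨a, ha, b, hb, d, hd, hab, had, hbd⟩ := Finset.two_lt_card.mp h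
    simp only [hs, Finset.mem_filter, mem_neighborFinset] at ha hb hd
    rcases hclaw v a b d hab had hbd ha.1 hb.1 hd.1 with h' | h' | h'
    · exact hc a b h' (ha.2.trans hb.2.symm)
    · exact hc a d h' (ha.2.trans hd.2.symm)
    · exact hc b d h' (hb.2.trans hd.2.symm)
  have hcard : s.card = 1 := by
    obtain ⟨m, hm⟩ := hk
    omega
  obtain ⟨a, ha⟩ := Finset.card_eq_one.mp hcard
  have hmem : ∀ u, (u ∈ G.neighborSet v ∧ c u = k) ↔ u ∈ s := by
    intro u
    simp [hs, Finset.mem_filter, mem_neighborFinset, mem_neighborSet]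
  refine ⟨k, a, ?_, ?_⟩
  · exact (hmem a).mpr (ha ▸ Finset.mem_singleton_self a)
  · intro u hu
    have := (hmem u).mp hu
    rw [ha, Finset.mem_singleton] at this
    exact this

theorem pcf_eq_chrom_clawfree_odd {V : Type*} [Fintype V] (G : SimpleGraph V)
    [DecidableRel G.Adj] (hclaw : ClawFree G) (hodd : ∀ v : V, Odd (G.degree v)) :
    pcfChromNum G = chromNum G := by
  unfold pcfChromNum chromNum
  congr 1
  ext n
  constructor
  · rintro ⟨c, hc, -⟩
    exact ⟨⟨c, fun {u v} h => hc u v h⟩⟩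
  · rintro ⟨c⟩
    exact ⟨c, proper_is_pcf G hclaw hodd c (fun u v h => c.valid h)⟩
end
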